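/- For every i ∈ [t], j ∈ [n_i], and s ∈ [m_i], the r-th generalized sum-rank weight of the full space 𝕄, for r = Σ_{l=1}^{i−1} m_l n_l + (j−1) m_i + s, equals n_1 + ... + n_{i−1} + j. Consequently, a sequence of integers is a subsequence of the sequence (d_1(𝕄), ..., d_{dim 𝕄}(𝕄)) if and only if it is a non-decreasing sequence of elements of [n_1 + ... + n_t] in which, for every i ∈ [t] and j ∈ [n_i], the integer n_1 + ... + n_{i−1} + j appears at most m_i times. -/

import Mathlib

open Module

variable {F : Type*} [Field F] [Fintype F] {t : ℕ} {m n : Fin t → ℕ}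

/-- The sum-rank weight of an element of `𝕄 = F^{m 0 × n 0} × ⋯ × F^{m (t-1) × n (t-1)}`. -/
noncomputable def srk (C : ∀ i : Fin t, Matrix (Fin (m i)) (Fin (n i)) F) : ℕ :=
  ∑ i, (C i).rank

/-- The maximum sum-rank of a code. -/
noncomputable def maxsrk (𝒞 : Submodule F (∀ i : Fin t, Matrix (Fin (m i)) (Fin (n i)) F)) : ℕ :=
  sSup {w | ∃ C ∈ 𝒞, srk C = w}

/-- The minimum distance of a code. -/
noncomputable def minDist (𝒞 : Submodule F (∀ i : Fin t, Matrix (Fin (m i)) (Fin (n i)) F)) : ℕ :=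
  sInf {w | ∃ C ∈ 𝒞, C ≠ 0 ∧ srk C = w}

/-- The maximum rank of a subspace of a matrix space. -/
noncomputable def maxrank {a b : ℕ} (𝒜 : Submodule F (Matrix (Fin a) (Fin b) F)) : ℕ :=
  sSup {w | ∃ A ∈ 𝒜, A.rank = w}

/-- Optimal anticodes in a single matrix space. -/
def IsOptAnticode {a b : ℕ} (𝒜 : Submodule F (Matrix (Fin a) (Fin b) F)) : Prop :=
  Module.finrank F 𝒜 = a * maxrank 𝒜

/-- The weight of a sum-rank metric code: the minimum of `maxsrk` over products of
optimal anticodes containing it. -/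
noncomputable def codeWt (𝒞 : Submodule F (∀ i : Fin t, Matrix (Fin (m i)) (Fin (n i)) F)) : ℕ :=
  sInf {w | ∃ 𝒜 : ∀ i : Fin t, Submodule F (Matrix (Fin (m i)) (Fin (n i)) F),
    (∀ i, IsOptAnticode (𝒜 i)) ∧ 𝒞 ≤ Submodule.pi Set.univ 𝒜 ∧
      maxsrk (Submodule.pi Set.univ 𝒜) = w}

/-- The `r`-th generalized sum-rank weight of a code. -/
noncomputable def gw (𝒞 : Submodule F (∀ i : Fin t, Matrix (Fin (m i)) (Fin (n i)) F))
    (r : ℕ) : ℕ :=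
  sInf {w | ∃ 𝒟 : Submodule F (∀ i : Fin t, Matrix (Fin (m i)) (Fin (n i)) F),
    𝒟 ≤ 𝒞 ∧ r ≤ Module.finrank F 𝒟 ∧ codeWt 𝒟 = w}

/-- `d` is a subsequence of `e`. -/
def IsSubseq {k K : ℕ} (d : Fin k → ℕ) (e : Fin K → ℕ) : Prop :=
  ∃ φ : Fin k → Fin K, StrictMono φ ∧ ∀ r, d r = e (φ r)

/-!
A product of optimal anticodes with maximum ranks `ρ l ≤ n l` has dimension `∑ l, m l * ρ l`
and maximum sum-rank `∑ l, ρ l`. Because `m` is non-increasing, among all `ρ` whose dimension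
exceeds `∑_{l<i} m l * n l + (j - 1) * m i`, the sum `∑ l, ρ l` is smallest when the blocks are
filled greedily from the left, which gives the lower bound `∑_{l<i} n l + j`; the anticodes of
matrices supported on their first `ρ l` columns attain it. Hence the generalized weights of `𝕄`
form a non-decreasing sequence in which `∑_{l<i} n l + j` occurs exactly `m i` times, and a
sequence is a subsequence of a sorted one iff it is sorted and a sub-multiset of it.
-/

open Finset

lemma isSubseq_iff_ofFn_sublist {k K : ℕ} {d : Fin k → ℕ} {e : Fin K → ℕ} :
    IsSubseq d e ↔ (List.ofFn d).Sublist (List.ofFn e) := by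
  rw [List.sublist_iff_exists_fin_orderEmbedding_get_eq]
  have hk := List.length_ofFn (f := d)
  have hK := List.length_ofFn (f := e)
  constructor
  · rintro ⟨φ, hφ, hde⟩
    refine ⟨((Fin.castOrderIso hk).toOrderEmbedding.trans
      (OrderEmbedding.ofStrictMono φ hφ)).trans (Fin.castOrderIso hK.symm).toOrderEmbedding,
      fun r => ?_⟩
    simp [hde]
    rfl
  · rintro ⟨f, hf⟩
    refine ⟨fun r => Fin.cast hK (f (Fin.cast hk.symm r)), fun r r' h => f.strictMono h,
      fun r => ?_⟩
    have := hf (Fin.cast hk.symm r)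
    simp only [List.get_ofFn] at this
    exact this

lemma List.count_ofFn {α : Type*} [DecidableEq α] {k : ℕ} (d : Fin k → α) (v : α) :
    (List.ofFn d).count v = #{r | d r = v} := by
  rw [← Multiset.coe_count, ← Fin.univ_val_map, Multiset.count_map, card_def, filter_val]
  simp only [eq_comm]

theorem isSubseq_iff_of_monotone {k K : ℕ} {d : Fin k → ℕ} {e : Fin K → ℕ} (he : Monotone e) :
    IsSubseq d e ↔ Monotone d ∧ ∀ v, #{r | d r = v} ≤ #{p | e p = v} := by
  simp only [isSubseq_iff_ofFn_sublist, ← List.count_ofFn]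
  constructor
  · intro h
    exact ⟨(he.sortedLE_ofFn.pairwise.sublist h).sortedLE.monotone, h.subperm.count_le⟩
  · rintro ⟨hd, hcount⟩
    exact List.sublist_of_subperm_of_sortedLE (List.subperm_ext_iff.2 fun v _ => hcount v)
      hd.sortedLE_ofFn he.sortedLE_ofFn

lemma val_finSigmaFinEquiv_mk {t : ℕ} (f : Fin t → ℕ) (i : Fin t) (x : Fin (f i)) :
    (finSigmaFinEquiv (⟨i, x⟩ : (l : Fin t) × Fin (f l)) : ℕ) = ∑ l ∈ Iio i, f l + x := by
  have hIio : (univ : Finset (Fin i)).map (Fin.castLEEmb i.2.le) = Iio i := by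
    ext l
    simp only [mem_map, mem_univ, true_and, Fin.castLEEmb_apply, mem_Iio, Fin.lt_def]
    exact ⟨by rintro ⟨l, rfl⟩; exact l.2, fun h => ⟨⟨l, h⟩, rfl⟩⟩
  rw [finSigmaFinEquiv_apply, ← hIio, sum_map]
  rfl

lemma sum_Iio_add_lt {t : ℕ} (f : Fin t → ℕ) {i : Fin t} {x : ℕ} (hx : x < f i) :
    ∑ l ∈ Iio i, f l + x < ∑ l, f l := by
  have := (finSigmaFinEquiv (⟨i, ⟨x, hx⟩⟩ : (l : Fin t) × Fin (f l))).isLt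
  rwa [val_finSigmaFinEquiv_mk] at this

lemma exists_eq_sum_Iio_add {t : ℕ} (f : Fin t → ℕ) {p : ℕ} (hp : p < ∑ l, f l) :
    ∃ i : Fin t, ∃ x < f i, p = ∑ l ∈ Iio i, f l + x := by
  obtain ⟨⟨i, x⟩, hx⟩ := finSigmaFinEquiv.surjective (⟨p, hp⟩ : Fin (∑ l, f l))
  exact ⟨i, x, x.2, by rw [← val_finSigmaFinEquiv_mk, hx]⟩

lemma sum_Iio_add_injective {t : ℕ} (f : Fin t → ℕ) {i i' : Fin t} {x x' : ℕ} (hx : x < f i)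
    (hx' : x' < f i') (h : ∑ l ∈ Iio i, f l + x = ∑ l ∈ Iio i', f l + x') : i = i' ∧ x = x' := by
  have := finSigmaFinEquiv.injective (show finSigmaFinEquiv (⟨i, ⟨x, hx⟩⟩ : (l : Fin t) × Fin (f l))
    = finSigmaFinEquiv ⟨i', ⟨x', hx'⟩⟩ from Fin.ext (by rwa [val_finSigmaFinEquiv_mk,
      val_finSigmaFinEquiv_mk]))
  rw [Sigma.mk.inj_iff] at this
  obtain ⟨rfl, hxx'⟩ := this
  exact ⟨rfl, by simpa using hxx'⟩

lemma exists_eq_sum_Iio_mul_add {t : ℕ} (m n : Fin t → ℕ) {p : ℕ} (hp : p < ∑ l, m l * n l) :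
    ∃ i : Fin t, ∃ x < n i, ∃ y < m i, p = ∑ l ∈ Iio i, m l * n l + x * m i + y := by
  obtain ⟨i, c, hc, rfl⟩ := exists_eq_sum_Iio_add (fun l => m l * n l) hp
  have hm : 0 < m i := Nat.pos_of_ne_zero fun h => by simp [h] at hc
  refine ⟨i, c / m i, (Nat.div_lt_iff_lt_mul hm).2 (by linarith), c % m i, Nat.mod_lt _ hm, ?_⟩
  rw [add_assoc, Nat.div_add_mod']

lemma sum_mul_ite_lt {t : ℕ} (g n : Fin t → ℕ) (i : Fin t) (j : ℕ) :
    ∑ l, g l * (if l < i then n l else if l = i then j else 0) =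
      ∑ l ∈ Iio i, g l * n l + g i * j := by
  rw [← sum_filter_add_sum_filter_not univ (· < i)]
  congr 1
  · exact sum_congr (by ext; simp) fun l hl => by simp_all
  · rw [sum_eq_single i] <;> simp_all

lemma sum_mul_le_of_antitone {t : ℕ} {m n ρ : Fin t → ℕ} (hm : Antitone m)
    (hρ : ∀ l, ρ l ≤ n l) (i : Fin t) {c : ℕ} (h : ∑ l, ρ l ≤ ∑ l ∈ Iio i, n l + c) :
    ∑ l, m l * ρ l ≤ ∑ l ∈ Iio i, m l * n l + c * m i := by
  -- termwise this is `(m l - m i) * (ρ l - [l < i] * n l) ≤ 0`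
  have key : ∀ l, (m l * ρ l : ℤ) - (if l < i then (m l * n l : ℤ) else 0)
      ≤ m i * ((ρ l : ℤ) - if l < i then (n l : ℤ) else 0) := by
    intro l
    split_ifs with hl
    · have := hm hl.le; have := hρ l; nlinarith
    · have := hm (not_lt.1 hl); nlinarith
  have hsum := sum_le_sum fun l (_ : l ∈ univ) => key l
  simp only [sum_sub_distrib, ← mul_sum, ← sum_filter, filter_gt_eq_Iio] at hsum
  zify at h ⊢
  nlinarith

namespace Matrix

variable (K : Type*) [Field K]

def rowsOfOne {j b : ℕ} (h : j ≤ b) : Matrix (Fin j) (Fin b) K :=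
  (1 : Matrix (Fin b) (Fin b) K).submatrix (Fin.castLE h) id

/-- The range is the space of matrices vanishing outside the first `j` columns. -/
def mulRowsOfOne (a : ℕ) {j b : ℕ} (h : j ≤ b) :
    Matrix (Fin a) (Fin j) K →ₗ[K] Matrix (Fin a) (Fin b) K where
  toFun B := B * rowsOfOne K h
  map_add' B B' := Matrix.add_mul B B' _
  map_smul' c B := Matrix.smul_mul c B _

variable {K}

lemma rowsOfOne_mul_transpose {j b : ℕ} (h : j ≤ b) : rowsOfOne K h * (rowsOfOne K h)ᵀ = 1 := by
  rw [rowsOfOne, transpose_submatrix, transpose_one,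
    ← submatrix_mul _ _ _ _ _ Function.bijective_id, Matrix.one_mul]
  exact submatrix_one_embedding (Fin.castLEEmb h)

lemma rank_transpose_rowsOfOne_mul_rowsOfOne {a j b : ℕ} (ha : j ≤ a) (hb : j ≤ b) :
    ((rowsOfOne K ha)ᵀ * rowsOfOne K hb).rank = j := by
  refine le_antisymm ((rank_mul_le_right _ _).trans (rank_le_height _)) ?_
  calc j = (1 : Matrix (Fin j) (Fin j) K).rank := by simp
    _ = (rowsOfOne K ha * ((rowsOfOne K ha)ᵀ * rowsOfOne K hb) * (rowsOfOne K hb)ᵀ).rank := by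
      simp only [← Matrix.mul_assoc, rowsOfOne_mul_transpose, Matrix.one_mul]
    _ ≤ _ := (rank_mul_le_left _ _).trans (rank_mul_le_right _ _)

lemma mulRowsOfOne_injective (a : ℕ) {j b : ℕ} (h : j ≤ b) :
    Function.Injective (mulRowsOfOne K a h) := by
  intro B B' hBB'
  simpa [mulRowsOfOne, Matrix.mul_assoc, rowsOfOne_mul_transpose] using
    congrArg (· * (rowsOfOne K h)ᵀ) hBB'

end Matrix

lemma Submodule.finrank_pi_univ {K ι : Type*} [DivisionRing K] [Fintype ι] {M : ι → Type*}
    [∀ i, AddCommGroup (M i)] [∀ i, Module K (M i)] [∀ i, FiniteDimensional K (M i)]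
    (p : ∀ i, Submodule K (M i)) :
    finrank K (Submodule.pi Set.univ p) = ∑ i, finrank K (p i) := by
  let e : Submodule.pi Set.univ p ≃ₗ[K] ∀ i, p i :=
    { toFun x i := ⟨x.1 i, x.2 i (Set.mem_univ i)⟩
      map_add' _ _ := rfl
      map_smul' _ _ := rfl
      invFun y := ⟨fun i => y i, fun i _ => (y i).2⟩
      left_inv _ := rfl
      right_inv _ := rfl }
  rw [e.finrank_eq, finrank_pi_fintype]

/-- The ambient space `𝕄`. -/
abbrev SumRankSpace (K : Type*) {t : ℕ} (m n : Fin t → ℕ) : Type _ :=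
  ∀ i : Fin t, Matrix (Fin (m i)) (Fin (n i)) K

section SumRank

variable {K : Type*} [Field K]

section Anticodes

variable {a b : ℕ} {𝒜 : Submodule K (Matrix (Fin a) (Fin b) K)}

lemma le_maxrank {A : Matrix (Fin a) (Fin b) K} (h : A ∈ 𝒜) : A.rank ≤ maxrank 𝒜 :=
  le_csSup ⟨b, by rintro _ ⟨A, -, rfl⟩; exact A.rank_le_width⟩ ⟨A, h, rfl⟩

lemma maxrank_le {k : ℕ} (h : ∀ A ∈ 𝒜, A.rank ≤ k) : maxrank 𝒜 ≤ k :=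
  csSup_le ⟨0, 0, zero_mem _, Matrix.rank_zero⟩ fun _ ⟨A, hA, hw⟩ => hw ▸ h A hA

lemma maxrank_le_width (𝒜 : Submodule K (Matrix (Fin a) (Fin b) K)) : maxrank 𝒜 ≤ b :=
  maxrank_le fun A _ => A.rank_le_width

lemma exists_rank_eq_maxrank (𝒜 : Submodule K (Matrix (Fin a) (Fin b) K)) :
    ∃ A ∈ 𝒜, A.rank = maxrank 𝒜 :=
  Nat.sSup_mem (s := {w | ∃ A ∈ 𝒜, A.rank = w}) ⟨0, 0, zero_mem _, Matrix.rank_zero⟩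
    ⟨b, by rintro _ ⟨A, -, rfl⟩; exact A.rank_le_width⟩

lemma exists_isOptAnticode_maxrank_eq {j : ℕ} (ha : j ≤ a) (hb : j ≤ b) :
    ∃ 𝒜 : Submodule K (Matrix (Fin a) (Fin b) K), IsOptAnticode 𝒜 ∧ maxrank 𝒜 = j := by
  have hmax : maxrank (LinearMap.range (Matrix.mulRowsOfOne K a hb)) = j := by
    refine le_antisymm (maxrank_le ?_) ?_
    · rintro _ ⟨B, rfl⟩
      exact (Matrix.rank_mul_le_right B _).trans (Matrix.rank_le_height _)
    · calc j = ((Matrix.rowsOfOne K ha).transpose * Matrix.rowsOfOne K hb).rank :=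
            (Matrix.rank_transpose_rowsOfOne_mul_rowsOfOne ha hb).symm
        _ ≤ _ := le_maxrank (LinearMap.mem_range_self _ (Matrix.rowsOfOne K ha).transpose)
  refine ⟨_, ?_, hmax⟩
  rw [IsOptAnticode, hmax, LinearMap.finrank_range_of_inj (Matrix.mulRowsOfOne_injective a hb)]
  simp [Module.finrank_matrix]

end Anticodes

lemma finrank_ambient : finrank K (SumRankSpace K m n) = ∑ i, m i * n i := by
  rw [Module.finrank_pi_fintype]
  simp [Module.finrank_matrix]

lemma maxsrk_pi (𝒜 : ∀ i, Submodule K (Matrix (Fin (m i)) (Fin (n i)) K)) :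
    maxsrk (Submodule.pi Set.univ 𝒜) = ∑ i, maxrank (𝒜 i) := by
  refine le_antisymm (csSup_le ⟨0, 0, zero_mem _, by simp [srk]⟩ ?_) ?_
  · rintro _ ⟨C, hC, rfl⟩
    exact sum_le_sum fun i _ => le_maxrank (hC i (Set.mem_univ i))
  · choose A hA hrk using fun i => exists_rank_eq_maxrank (𝒜 i)
    refine le_csSup ⟨∑ i, n i, ?_⟩ ⟨A, fun i _ => hA i, sum_congr rfl fun i _ => hrk i⟩
    rintro _ ⟨C, -, rfl⟩
    exact sum_le_sum fun i _ => (C i).rank_le_width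

lemma gw_mono {𝒞 : Submodule K (SumRankSpace K m n)} {r r' : ℕ}
    (h : r ≤ r') (h' : r' ≤ finrank K 𝒞) : gw 𝒞 r ≤ gw 𝒞 r' :=
  csInf_le_csInf (OrderBot.bddBelow _) ⟨_, 𝒞, le_rfl, h', rfl⟩
    fun _ ⟨𝒟, h𝒟, hr, hw⟩ => ⟨𝒟, h𝒟, h.trans hr, hw⟩

variable {𝒜 : ∀ i, Submodule K (Matrix (Fin (m i)) (Fin (n i)) K)}

lemma finrank_pi_of_isOptAnticode (h𝒜 : ∀ i, IsOptAnticode (𝒜 i)) :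
    finrank K (Submodule.pi Set.univ 𝒜) = ∑ i, m i * maxrank (𝒜 i) := by
  rw [Submodule.finrank_pi_univ]
  exact sum_congr rfl fun i _ => h𝒜 i

lemma codeWt_pi_le (h𝒜 : ∀ i, IsOptAnticode (𝒜 i)) :
    codeWt (Submodule.pi Set.univ 𝒜) ≤ ∑ i, maxrank (𝒜 i) :=
  Nat.sInf_le ⟨𝒜, h𝒜, le_rfl, maxsrk_pi 𝒜⟩

lemma exists_pi_isOptAnticode (hmn : ∀ i, n i ≤ m i) {ρ : Fin t → ℕ} (hρ : ∀ i, ρ i ≤ n i) :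
    ∃ 𝒜 : ∀ i, Submodule K (Matrix (Fin (m i)) (Fin (n i)) K),
      (∀ i, IsOptAnticode (𝒜 i)) ∧ ∀ i, maxrank (𝒜 i) = ρ i := by
  choose 𝒜 h𝒜 using fun i =>
    exists_isOptAnticode_maxrank_eq (K := K) ((hρ i).trans (hmn i)) (hρ i)
  exact ⟨𝒜, fun i => (h𝒜 i).1, fun i => (h𝒜 i).2⟩

lemma le_codeWt (hm : Antitone m) (hmn : ∀ i, n i ≤ m i)
    {𝒟 : Submodule K (SumRankSpace K m n)} {i : Fin t} {j : ℕ}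
    (h𝒟 : ∑ l ∈ Iio i, m l * n l + (j - 1) * m i < finrank K 𝒟) :
    ∑ l ∈ Iio i, n l + j ≤ codeWt 𝒟 := by
  obtain ⟨𝒜, h𝒜, hmax⟩ := exists_pi_isOptAnticode (K := K) hmn (ρ := n) fun _ => le_rfl
  have htop : Submodule.pi Set.univ 𝒜 = ⊤ := Submodule.eq_top_of_finrank_eq <| by
    rw [finrank_pi_of_isOptAnticode h𝒜, finrank_ambient]
    simp only [hmax]
  refine le_csInf ⟨_, 𝒜, h𝒜, htop ▸ le_top, rfl⟩ ?_
  rintro _ ⟨𝒜, h𝒜, h𝒟𝒜, rfl⟩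
  rw [maxsrk_pi]
  by_contra! hlt
  have hsum := sum_mul_le_of_antitone hm (fun l => maxrank_le_width (𝒜 l)) i (c := j - 1)
    (by omega)
  have hdim := Submodule.finrank_mono h𝒟𝒜
  rw [finrank_pi_of_isOptAnticode h𝒜] at hdim
  omega

theorem gw_top_eq (hm : Antitone m) (hmn : ∀ i, n i ≤ m i) {i : Fin t} {j s : ℕ} (hj : 1 ≤ j)
    (hjn : j ≤ n i) (hs : 1 ≤ s) (hsm : s ≤ m i) :
    gw (⊤ : Submodule K (SumRankSpace K m n)) (∑ l ∈ Iio i, m l * n l + (j - 1) * m i + s) =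
      ∑ l ∈ Iio i, n l + j := by
  obtain ⟨𝒜, h𝒜, hmax⟩ := exists_pi_isOptAnticode (K := K) hmn
    (ρ := fun l => if l < i then n l else if l = i then j else 0)
    fun l => by split_ifs with _ h; exacts [le_rfl, h ▸ hjn, Nat.zero_le _]
  have hdim : ∑ l ∈ Iio i, m l * n l + (j - 1) * m i + s ≤
      finrank K (Submodule.pi Set.univ 𝒜) := by
    rw [finrank_pi_of_isOptAnticode h𝒜]
    simp only [hmax, sum_mul_ite_lt]
    obtain ⟨j, rfl⟩ := Nat.exists_eq_add_of_le' hj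
    simp only [add_tsub_cancel_right]
    nlinarith
  refine le_antisymm ?_ (le_csInf ⟨_, Submodule.pi Set.univ 𝒜, le_top, hdim, rfl⟩ ?_)
  · calc _ ≤ codeWt (Submodule.pi Set.univ 𝒜) := by
          apply Nat.sInf_le
          exact ⟨_, le_top, hdim, rfl⟩
      _ ≤ ∑ l, maxrank (𝒜 l) := codeWt_pi_le h𝒜
      _ = ∑ l ∈ Iio i, n l + j := by simpa [hmax] using sum_mul_ite_lt 1 n i j
  · rintro _ ⟨𝒟, -, h𝒟, rfl⟩
    exact le_codeWt hm hmn ((Nat.lt_add_of_pos_right hs).trans_le h𝒟)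

lemma gw_top_block (hm : Antitone m) (hmn : ∀ i, n i ≤ m i) {i : Fin t} {x y : ℕ}
    (hx : x < n i) (hy : y < m i) :
    gw (⊤ : Submodule K (SumRankSpace K m n))
      (∑ l ∈ Iio i, m l * n l + x * m i + y + 1) = ∑ l ∈ Iio i, n l + (x + 1) := by
  simpa [add_assoc] using
    gw_top_eq (K := K) hm hmn (j := x + 1) (s := y + 1) (by omega) hx (by omega) hy

lemma gw_top_succ_eq_iff (hm : Antitone m) (hmn : ∀ i, n i ≤ m i) {p : ℕ}
    (hp : p < ∑ l, m l * n l) {i : Fin t} {j : ℕ} (hj : 1 ≤ j) (hjn : j ≤ n i) :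
    gw (⊤ : Submodule K (SumRankSpace K m n)) (p + 1) =
        ∑ l ∈ Iio i, n l + j ↔
      ∃ y < m i, p = ∑ l ∈ Iio i, m l * n l + (j - 1) * m i + y := by
  constructor
  · obtain ⟨i', x, hx, y, hy, rfl⟩ := exists_eq_sum_Iio_mul_add m n hp
    rw [gw_top_block hm hmn hx hy]
    intro h
    obtain ⟨rfl, hxj⟩ := sum_Iio_add_injective n hx (show j - 1 < n i by omega) (by omega)
    exact ⟨y, hy, by rw [hxj]⟩
  · rintro ⟨y, hy, rfl⟩
    exact gw_top_eq hm hmn hj hjn (by omega) hy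

lemma gw_top_succ_mem_Icc (hm : Antitone m) (hmn : ∀ i, n i ≤ m i) {p : ℕ}
    (hp : p < ∑ l, m l * n l) :
    gw (⊤ : Submodule K (SumRankSpace K m n)) (p + 1) ∈
      Set.Icc 1 (∑ l, n l) := by
  obtain ⟨i, x, hx, y, hy, rfl⟩ := exists_eq_sum_Iio_mul_add m n hp
  rw [gw_top_block hm hmn hx hy]
  exact ⟨by omega, sum_Iio_add_lt n hx⟩

lemma card_gw_top_succ_eq (hm : Antitone m) (hmn : ∀ i, n i ≤ m i) {i : Fin t} {j : ℕ}
    (hj : 1 ≤ j) (hjn : j ≤ n i) :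
    #{p : Fin (finrank K (SumRankSpace K m n)) |
      gw (⊤ : Submodule K (SumRankSpace K m n)) (p + 1) =
        ∑ l ∈ Iio i, n l + j} = m i := by
  have hblock : ∀ y : Fin (m i), ∑ l ∈ Iio i, m l * n l + (j - 1) * m i + y <
      finrank K (SumRankSpace K m n) := fun y => by
    have hj' : (j - 1 + 1) * m i ≤ n i * m i := Nat.mul_le_mul_right _ (by omega)
    rw [add_mul, one_mul, mul_comm (n i)] at hj'
    rw [finrank_ambient, add_assoc]
    exact sum_Iio_add_lt (fun l => m l * n l) (by linarith [y.2])
  have hfiber : univ.filter (fun p : Fin (finrank K (SumRankSpace K m n)) =>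
      gw (⊤ : Submodule K (SumRankSpace K m n)) (p + 1) =
        ∑ l ∈ Iio i, n l + j) = univ.image fun y => ⟨_, hblock y⟩ := by
    ext p
    rw [mem_filter, gw_top_succ_eq_iff hm hmn (finrank_ambient (K := K) ▸ p.2) hj hjn]
    simp only [mem_univ, true_and, mem_image, Fin.ext_iff]
    exact ⟨fun ⟨y, hy, h⟩ => ⟨⟨y, hy⟩, h.symm⟩, fun ⟨y, h⟩ => ⟨y, y.2, h.symm⟩⟩
  rw [hfiber, card_image_of_injective _ fun y y' h => Fin.ext (by simpa using h), card_fin]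

theorem isSubseq_gw_top_iff (hm : Antitone m) (hmn : ∀ i, n i ≤ m i) {k : ℕ} (d : Fin k → ℕ) :
    IsSubseq d (fun r : Fin (finrank K (SumRankSpace K m n)) =>
        gw (⊤ : Submodule K (SumRankSpace K m n)) (r.1 + 1)) ↔
      Monotone d ∧ (∀ r, 1 ≤ d r ∧ d r ≤ ∑ i, n i) ∧
        ∀ i : Fin t, ∀ j : ℕ, 1 ≤ j → j ≤ n i →
          #{r | d r = ∑ l ∈ Iio i, n l + j} ≤ m i := by
  have hN := finrank_ambient (K := K) (m := m) (n := n)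
  have he : Monotone fun p : Fin (finrank K (SumRankSpace K m n)) =>
      gw (⊤ : Submodule K (SumRankSpace K m n)) (p.1 + 1) := fun p q hpq =>
    gw_mono (by simpa using hpq) (by rw [finrank_top]; exact q.2)
  rw [isSubseq_iff_of_monotone he]
  refine and_congr_right fun _ => ⟨fun hcount => ⟨fun r => ?_, fun i j hj hjn => ?_⟩, ?_⟩
  · obtain ⟨p, hp⟩ := card_pos.1 ((card_pos.2 ⟨r, by simp⟩).trans_le (hcount (d r)))
    rw [mem_filter] at hp
    rw [← hp.2]
    exact gw_top_succ_mem_Icc hm hmn (hN ▸ p.2)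
  · exact (hcount _).trans (card_gw_top_succ_eq hm hmn hj hjn).le
  · rintro ⟨hrange, hcount⟩ v
    by_cases hv : 1 ≤ v ∧ v ≤ ∑ l, n l
    · obtain ⟨i, x, hx, hvx⟩ := exists_eq_sum_Iio_add n (show v - 1 < ∑ l, n l by omega)
      obtain rfl : v = ∑ l ∈ Iio i, n l + (x + 1) := by omega
      rw [card_gw_top_succ_eq hm hmn (by omega) hx]
      exact hcount i (x + 1) (by omega) hx
    · have : #{r | d r = v} = 0 :=
        card_eq_zero.2 (filter_eq_empty_iff.2 fun r _ h => hv (h ▸ hrange r))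
      omega

end SumRank

theorem gw_of_ambient_space_general
    (hm_mono : ∀ i j : Fin t, i ≤ j → m j ≤ m i)
    (hmn : ∀ i, n i ≤ m i) :
    (∀ i : Fin t, ∀ j s : ℕ, 1 ≤ j → j ≤ n i → 1 ≤ s → s ≤ m i →
      gw (⊤ : Submodule F (∀ i : Fin t, Matrix (Fin (m i)) (Fin (n i)) F))
        (∑ l ∈ Finset.Iio i, m l * n l + (j - 1) * m i + s) =
        ∑ l ∈ Finset.Iio i, n l + j) ∧
    (∀ k : ℕ, ∀ d : Fin k → ℕ,
      IsSubseq d (fun r : Fin (Module.finrank F (∀ i : Fin t, Matrix (Fin (m i)) (Fin (n i)) F)) =>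
          gw (⊤ : Submodule F (∀ i : Fin t, Matrix (Fin (m i)) (Fin (n i)) F)) (r.1 + 1)) ↔
        (Monotone d ∧ (∀ r, 1 ≤ d r ∧ d r ≤ ∑ i, n i) ∧
          ∀ i : Fin t, ∀ j : ℕ, 1 ≤ j → j ≤ n i →
            (Finset.univ.filter (fun r : Fin k => d r = ∑ l ∈ Finset.Iio i, n l + j)).card
              ≤ m i)) :=
  ⟨fun _ _ _ hj hjn hs hsm => gw_top_eq hm_mono hmn hj hjn hs hsm,
    fun _ d => isSubseq_gw_top_iff hm_mono hmn d⟩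

/-- The generalized sum-rank weights of the full ambient space `𝕄`: for `i ∈ [t]`,
`j ∈ [n i]`, `s ∈ [m i]`, the `(∑_{l<i} m l * n l + (j-1) * m i + s)`-th generalized weight
of `𝕄` equals `∑_{l<i} n l + j`. Consequently, a sequence is a subsequence of the sequence of
generalized weights of `𝕄` iff it is non-decreasing with values in `[n_1 + ⋯ + n_t]` and each
value `∑_{l<i} n l + j` appears at most `m i` times. -/
theorem gw_of_ambient_space (ht : 0 < t)
    (hm_mono : ∀ i j : Fin t, i ≤ j → m j ≤ m i)
    (hn_pos : ∀ i, 0 < n i) (hmn : ∀ i, n i ≤ m i) :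
    (∀ i : Fin t, ∀ j s : ℕ, 1 ≤ j → j ≤ n i → 1 ≤ s → s ≤ m i →
      gw (⊤ : Submodule F (∀ i : Fin t, Matrix (Fin (m i)) (Fin (n i)) F))
        (∑ l ∈ Finset.Iio i, m l * n l + (j - 1) * m i + s) =
        ∑ l ∈ Finset.Iio i, n l + j) ∧
    (∀ k : ℕ, ∀ d : Fin k → ℕ,
      IsSubseq d (fun r : Fin (Module.finrank F (∀ i : Fin t, Matrix (Fin (m i)) (Fin (n i)) F)) =>
          gw (⊤ : Submodule F (∀ i : Fin t, Matrix (Fin (m i)) (Fin (n i)) F)) (r.1 + 1)) ↔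
        (Monotone d ∧ (∀ r, 1 ≤ d r ∧ d r ≤ ∑ i, n i) ∧
          ∀ i : Fin t, ∀ j : ℕ, 1 ≤ j → j ≤ n i →
            (Finset.univ.filter (fun r : Fin k => d r = ∑ l ∈ Finset.Iio i, n l + j)).card
              ≤ m i)) :=
  gw_of_ambient_space_general hm_mono hmn
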